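/- Let A, B, X be bounded operators on H with X self-adjoint, and suppose the block operator M = [[A, X],[X, B]] on H ⊕ H is positive. Then for every t ∈ (0,1), ±X ≤ (1/(2√(t(1−t)))) (tB + (1−t)A). -/

import Mathlib

/-!
For real `a, b`, `⟪(a² A + 2ab X + b² B) x, x⟫ = ⟪M (a x, b x), (a x, b x)⟫ ≥ 0` where
`M = [[A, X], [X, B]]`, so `a² A + 2ab X + b² B` is positive. With `c = 1 / (2√(t(1-t)))`, the
choice `a² = c(1-t)`, `b² = ct`, `ab = ±1/2` turns it into `c(tB + (1-t)A) ± X`.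
-/

open ContinuousLinearMap

variable {H : Type*} [NormedAddCommGroup H] [InnerProductSpace ℂ H] [CompleteSpace H]

/-- The 2×2 block operator `[[A, X],[Y, B]]` acting on the Hilbert space `H ⊕ H`
(realized as `WithLp 2 (H × H)`). -/
noncomputable def blockOperator (A X Y B : H →L[ℂ] H) :
    WithLp 2 (H × H) →L[ℂ] WithLp 2 (H × H) :=
  (WithLp.prodContinuousLinearEquiv 2 ℂ H H).symm.toContinuousLinearMap ∘L
    ((A ∘L ContinuousLinearMap.fst ℂ H H + X ∘L ContinuousLinearMap.snd ℂ H H).prod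
      (Y ∘L ContinuousLinearMap.fst ℂ H H + B ∘L ContinuousLinearMap.snd ℂ H H)) ∘L
    (WithLp.prodContinuousLinearEquiv 2 ℂ H H).toContinuousLinearMap

theorem ContinuousLinearMap.IsPositive.of_inner_eq {E F : Type*} [NormedAddCommGroup E]
    [InnerProductSpace ℂ E] [NormedAddCommGroup F] [InnerProductSpace ℂ F]
    {T : F →L[ℂ] F} (hT : T.IsPositive) (P : E →L[ℂ] E) (f : E → F)
    (h : ∀ x, inner ℂ (P x) x = inner ℂ (T (f x)) (f x)) : P.IsPositive := by
  rw [isPositive_iff_complex] at hT ⊢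
  simpa only [h] using fun x => hT (f x)

section Block

variable {E : Type*} [NormedAddCommGroup E] [InnerProductSpace ℂ E]

theorem inner_blockOperator_toLp (A X Y B : E →L[ℂ] E) (u w : E) :
    inner ℂ (blockOperator A X Y B (WithLp.toLp 2 (u, w))) (WithLp.toLp 2 (u, w)) =
      inner ℂ (A u) u + inner ℂ (X w) u + inner ℂ (Y u) w + inner ℂ (B w) w := by
  simp [blockOperator, inner_add_left]
  ring

theorem ContinuousLinearMap.IsPositive.of_blockOperator {A X Y B : E →L[ℂ] E}
    (hM : (blockOperator A X Y B).IsPositive) (a b : ℝ) :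
    (((a ^ 2 : ℝ) : ℂ) • A + ((a * b : ℝ) : ℂ) • (X + Y) + ((b ^ 2 : ℝ) : ℂ) • B).IsPositive :=
  hM.of_inner_eq _ (fun x => WithLp.toLp 2 ((a : ℂ) • x, (b : ℂ) • x)) fun x => by
    simp only [inner_blockOperator_toLp, map_smul, inner_smul_left, inner_smul_right, add_apply,
      smul_apply, inner_add_left, Complex.conj_ofReal]
    push_cast
    ring

end Block

theorem exists_sq_eq_sq_eq_mul_eq_half {x y : ℝ} (hx : 0 < x) (hy : 0 < y) :
    ∃ a b : ℝ, a ^ 2 = 1 / (2 * Real.sqrt (x * y)) * y ∧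
      b ^ 2 = 1 / (2 * Real.sqrt (x * y)) * x ∧ a * b = 1 / 2 := by
  have hs : 0 < Real.sqrt (x * y) := Real.sqrt_pos.2 (mul_pos hx hy)
  refine ⟨Real.sqrt (1 / (2 * Real.sqrt (x * y)) * y), Real.sqrt (1 / (2 * Real.sqrt (x * y)) * x),
    Real.sq_sqrt (by positivity), Real.sq_sqrt (by positivity), ?_⟩
  rw [← Real.sqrt_mul (by positivity), Real.sqrt_eq_iff_mul_self_eq (by positivity) (by norm_num)]
  field_simp
  rw [Real.sq_sqrt (mul_pos hx hy).le]

theorem blockOperator_isPositive_pm_upper_bound_general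
    (A B X : H →L[ℂ] H)
    (hM : (blockOperator A X X B).IsPositive) :
    ∀ t : ℝ, 0 < t → t < 1 →
      (((1 / (2 * Real.sqrt (t * (1 - t))) : ℝ) : ℂ) •
          ((t : ℂ) • B + ((1 - t : ℝ) : ℂ) • A) - X).IsPositive ∧
      (((1 / (2 * Real.sqrt (t * (1 - t))) : ℝ) : ℂ) •
          ((t : ℂ) • B + ((1 - t : ℝ) : ℂ) • A) + X).IsPositive := by
  intro t ht0 ht1
  obtain ⟨a, b, ha, hb, hab⟩ := exists_sq_eq_sq_eq_mul_eq_half ht0 (sub_pos.2 ht1)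
  constructor
  · convert hM.of_blockOperator a (-b) using 1
    rw [neg_sq, ha, hb, mul_neg, hab]
    push_cast
    module
  · convert hM.of_blockOperator a b using 1
    rw [ha, hb, hab]
    push_cast
    module

/-- If `X` is self-adjoint and `[[A, X],[X, B]] ≥ 0`, then for every `t ∈ (0,1)`,
`±X ≤ (1/(2√(t(1−t)))) (t B + (1−t) A)`. -/
theorem blockOperator_isPositive_pm_upper_bound
    (A B X : H →L[ℂ] H) (hX : IsSelfAdjoint X)
    (hM : (blockOperator A X X B).IsPositive) :
    ∀ t : ℝ, 0 < t → t < 1 →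
      (((1 / (2 * Real.sqrt (t * (1 - t))) : ℝ) : ℂ) •
          ((t : ℂ) • B + ((1 - t : ℝ) : ℂ) • A) - X).IsPositive ∧
      (((1 / (2 * Real.sqrt (t * (1 - t))) : ℝ) : ℂ) •
          ((t : ℂ) • B + ((1 - t : ℝ) : ℂ) • A) + X).IsPositive :=
  blockOperator_isPositive_pm_upper_bound_general A B X hM
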